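/- arXiv:2304.03143 — 3 statements merged into one kernel-verified Lean document; each statement's English description precedes it below -/
import Mathlib

section
/- Let α ≥ 3, C_1 > 0, R ≥ 1, and let (L_k) be the renormalization scales with L_{k+1} = l_k L_k, l_k = ⌊L_k^{1/4}⌋. Suppose k_0 satisfies (2R+3)²(C_1+1) L_k^{1−3α/8} ≤ 1 for all k ≥ k_0. If a sequence (p_k)_{k≥k_0} of nonnegative reals satisfies p_{k_0} ≤ L_{k_0}^{−α/2} and, for all k ≥ k_0, p_{k+1} ≤ (2R+3)² l_k^4 (p_k² + C_1 L_k^{−α}), then p_k ≤ L_k^{−α/2} for every k ≥ k_0. -/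
/-- the inductive renormalization estimate: if
`p_{k_0} ≤ L_{k_0}^{-α/2}` and
`p_{k+1} ≤ (2R+3)² l_k⁴ (p_k² + C₁ L_k^{-α})`, with
`(2R+3)²(C₁+1) L_k^{1-3α/8} ≤ 1` for `k ≥ k_0`, then `p_k ≤ L_k^{-α/2}`. -/
theorem stmt2 (α C₁ : ℝ) (hα : 3 ≤ α) (hC₁ : 0 < C₁)
    (R ℓ : ℕ) (hR : 1 ≤ R) (hℓ : 1 ≤ ℓ)
    (L l : ℕ → ℕ)
    (hL0 : L 0 = max (10 ^ 10) ℓ)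
    (hl : ∀ k, l k = ⌊((L k : ℝ) ^ ((1 : ℝ) / 4))⌋₊)
    (hLsucc : ∀ k, L (k + 1) = l k * L k)
    (k₀ : ℕ)
    (hk₀ : ∀ k ≥ k₀, ((2 * R + 3 : ℝ)) ^ 2 * (C₁ + 1) *
      (L k : ℝ) ^ (1 - 3 * α / 8) ≤ 1)
    (p : ℕ → ℝ) (hp : ∀ k, 0 ≤ p k)
    (hbase : p k₀ ≤ (L k₀ : ℝ) ^ (-(α / 2)))
    (hrec : ∀ k ≥ k₀, p (k + 1) ≤ ((2 * R + 3 : ℝ)) ^ 2 * (l k : ℝ) ^ 4 *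
      ((p k) ^ 2 + C₁ * (L k : ℝ) ^ (-α))) :
    ∀ k ≥ k₀, p k ≤ (L k : ℝ) ^ (-(α / 2)) := by
  -- L k ≥ 1 for all k
  have hL1 : ∀ k, 1 ≤ L k := by
    intro k
    induction k with
    | zero => rw [hL0]; exact le_max_of_le_left (by norm_num)
    | succ n ih =>
      have hlk : 1 ≤ l n := by
        rw [hl n]
        apply Nat.le_floor
        rw [Nat.cast_one]
        apply Real.one_le_rpow (by exact_mod_cast ih) (by norm_num)
      rw [hLsucc n]
      calc 1 = 1 * 1 := (one_mul 1).symm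
      _ ≤ l n * L n := Nat.mul_le_mul hlk ih
  have hL1' : ∀ k, (1 : ℝ) ≤ (L k : ℝ) := fun k => by exact_mod_cast hL1 k
  have hLpos : ∀ k, (0 : ℝ) < (L k : ℝ) := fun k => lt_of_lt_of_le one_pos (hL1' k)
  -- l k ^ 4 ≤ L k
  have hl4 : ∀ k, ((l k : ℝ)) ^ 4 ≤ (L k : ℝ) := by
    intro k
    have h1 : (l k : ℝ) ≤ (L k : ℝ) ^ ((1 : ℝ) / 4) := by
      rw [hl k]
      exact Nat.floor_le (Real.rpow_nonneg (le_of_lt (hLpos k)) _)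
    calc ((l k : ℝ)) ^ 4 ≤ ((L k : ℝ) ^ ((1 : ℝ) / 4)) ^ 4 :=
          pow_le_pow_left₀ (Nat.cast_nonneg _) h1 4
      _ = (L k : ℝ) ^ (((1 : ℝ) / 4) * (4 : ℕ)) := by
          rw [← Real.rpow_natCast ((L k : ℝ) ^ ((1:ℝ)/4)) 4, ← Real.rpow_mul (le_of_lt (hLpos k))]
      _ = (L k : ℝ) := by norm_num
  -- L (k+1) ≤ L k ^ (5/4)
  have hLs : ∀ k, (L (k + 1) : ℝ) ≤ (L k : ℝ) ^ ((5 : ℝ) / 4) := by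
    intro k
    have h1 : (l k : ℝ) ≤ (L k : ℝ) ^ ((1 : ℝ) / 4) := by
      rw [hl k]
      exact Nat.floor_le (Real.rpow_nonneg (le_of_lt (hLpos k)) _)
    rw [hLsucc k]
    push_cast
    calc (l k : ℝ) * (L k : ℝ) ≤ (L k : ℝ) ^ ((1 : ℝ) / 4) * (L k : ℝ) ^ (1 : ℝ) := by
          rw [Real.rpow_one]
          exact mul_le_mul_of_nonneg_right h1 (le_of_lt (hLpos k))
      _ = (L k : ℝ) ^ ((5 : ℝ) / 4) := by
          rw [← Real.rpow_add (hLpos k)]; norm_num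
  intro k hk
  induction k, hk using Nat.le_induction with
  | base => exact hbase
  | succ n hn ih =>
    have hLn := hLpos n
    have hA : (0 : ℝ) < ((2 * R + 3 : ℝ)) ^ 2 := by positivity
    -- p n ^ 2 ≤ L n ^ (-α)
    have hpsq : (p n) ^ 2 ≤ (L n : ℝ) ^ (-α) := by
      calc (p n) ^ 2 ≤ ((L n : ℝ) ^ (-(α / 2))) ^ 2 := pow_le_pow_left₀ (hp n) ih 2
        _ = (L n : ℝ) ^ ((-(α / 2)) * (2 : ℕ)) := by
            rw [← Real.rpow_natCast ((L n : ℝ) ^ (-(α/2))) 2, ← Real.rpow_mul (le_of_lt hLn)]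
        _ = (L n : ℝ) ^ (-α) := by norm_num
    have key : p (n + 1) ≤ ((2 * R + 3 : ℝ)) ^ 2 * (C₁ + 1) *
        ((L n : ℝ) ^ (1 - 3 * α / 8)) * (L n : ℝ) ^ (-(5 * α / 8)) := by
      calc p (n + 1) ≤ ((2 * R + 3 : ℝ)) ^ 2 * (l n : ℝ) ^ 4 *
            ((p n) ^ 2 + C₁ * (L n : ℝ) ^ (-α)) := hrec n hn
        _ ≤ ((2 * R + 3 : ℝ)) ^ 2 * (L n : ℝ) *
            ((1 + C₁) * (L n : ℝ) ^ (-α)) := by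
            apply mul_le_mul
            · exact mul_le_mul_of_nonneg_left (hl4 n) (le_of_lt hA)
            · rw [add_mul, one_mul]
              exact add_le_add hpsq le_rfl
            · positivity
            · positivity
        _ = ((2 * R + 3 : ℝ)) ^ 2 * (C₁ + 1) * ((L n : ℝ) ^ (1 : ℝ) * (L n : ℝ) ^ (-α)) := by
            rw [Real.rpow_one]; ring
        _ = ((2 * R + 3 : ℝ)) ^ 2 * (C₁ + 1) *
            ((L n : ℝ) ^ (1 - 3 * α / 8) * (L n : ℝ) ^ (-(5 * α / 8))) := by
            rw [← Real.rpow_add hLn, ← Real.rpow_add hLn]; ring_nf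
        _ = _ := by ring
    have hle1 : ((2 * R + 3 : ℝ)) ^ 2 * (C₁ + 1) * ((L n : ℝ) ^ (1 - 3 * α / 8)) ≤ 1 :=
      hk₀ n hn
    have key2 : p (n + 1) ≤ (L n : ℝ) ^ (-(5 * α / 8)) := by
      calc p (n + 1) ≤ _ := key
        _ ≤ 1 * (L n : ℝ) ^ (-(5 * α / 8)) := by
            exact mul_le_mul_of_nonneg_right hle1 (Real.rpow_nonneg (le_of_lt hLn) _)
        _ = _ := one_mul _
    -- L n ^ (-(5α/8)) ≤ L (n+1) ^ (-(α/2))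
    refine key2.trans ?_
    calc (L n : ℝ) ^ (-(5 * α / 8)) = ((L n : ℝ) ^ ((5 : ℝ) / 4)) ^ (-(α / 2)) := by
          rw [← Real.rpow_mul (le_of_lt hLn)]; ring_nf
      _ ≤ (L (n + 1) : ℝ) ^ (-(α / 2)) := by
          apply Real.rpow_le_rpow_of_nonpos (hLpos (n + 1)) (hLs n)
          linarith
end

section
/- Let (q_j)_{j≥2} be a sequence in [0,1] satisfying q_2 ≤ 1/2 and q_{j+1} ≤ q_j² + C · 3^{−(j_0 + j)α} for all j ≥ 2, where α ≥ 1, C > 0, and j_0 ∈ ℕ satisfies C · 3^{−j_0} ≤ 1 − 1/√2. Then q_j ≤ 2^{−j/2} for all j ≥ 2. -/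
/-- if `q₂ ≤ 1/2` and `q_{j+1} ≤ q_j² + C 3^{-(j₀+j)α}` with
`C 3^{-j₀} ≤ 1 - 1/√2` and `α ≥ 1`, then `q_j ≤ 2^{-j/2}` for all `j ≥ 2`. -/
theorem stmt9 (α C : ℝ) (hα : 1 ≤ α) (hC : 0 < C) (j₀ : ℕ)
    (hj₀ : C * (3 : ℝ) ^ (-(j₀ : ℝ)) ≤ 1 - 1 / Real.sqrt 2)
    (q : ℕ → ℝ) (hq : ∀ j, q j ∈ Set.Icc (0 : ℝ) 1)
    (h2 : q 2 ≤ 1 / 2)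
    (hrec : ∀ j ≥ 2, q (j + 1) ≤ (q j) ^ 2 + C * (3 : ℝ) ^ (-((j₀ : ℝ) + j) * α)) :
    ∀ j ≥ 2, q j ≤ (2 : ℝ) ^ (-(j : ℝ) / 2) := by
  have hs2 : (1:ℝ) / Real.sqrt 2 = (2:ℝ) ^ (-(1:ℝ)/2) := by
    rw [Real.sqrt_eq_rpow, one_div, ← Real.rpow_neg (by norm_num)]
    norm_num
  intro j hj
  induction j, hj using Nat.le_induction with
  | base =>
    have : (2:ℝ) ^ (-((2:ℕ):ℝ)/2) = 1/2 := by
      norm_num [Real.rpow_neg_one]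
    rw [this]; exact h2
  | succ j hj ih =>
    have hq0 := (hq j).1
    have hjR : (2:ℝ) ≤ (j:ℝ) := by exact_mod_cast hj
    have hj₀R : (0:ℝ) ≤ (j₀:ℝ) := Nat.cast_nonneg _
    -- square bound
    have hsq : q j ^ 2 ≤ (2:ℝ) ^ (-(j:ℝ)) := by
      calc q j ^ 2 ≤ ((2:ℝ) ^ (-(j:ℝ)/2)) ^ 2 := pow_le_pow_left₀ hq0 ih 2
        _ = (2:ℝ) ^ (-(j:ℝ)) := by
          rw [← Real.rpow_natCast ((2:ℝ) ^ (-(j:ℝ)/2)) 2,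
            ← Real.rpow_mul (by norm_num)]
          norm_num
    -- error bound
    have herr : C * (3:ℝ) ^ (-((j₀:ℝ) + j) * α) ≤ (1 - 1/Real.sqrt 2) * (3:ℝ) ^ (-(j:ℝ)) := by
      have h1 : (3:ℝ) ^ (-((j₀:ℝ) + j) * α) ≤ (3:ℝ) ^ (-((j₀:ℝ) + j)) := by
        apply Real.rpow_le_rpow_of_exponent_le (by norm_num)
        nlinarith
      have h2' : C * (3:ℝ) ^ (-((j₀:ℝ) + j)) = (C * (3:ℝ) ^ (-(j₀:ℝ))) * (3:ℝ) ^ (-(j:ℝ)) := by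
        rw [mul_assoc, ← Real.rpow_add (by norm_num)]
        ring_nf
      calc C * (3:ℝ) ^ (-((j₀:ℝ) + j) * α)
          ≤ C * (3:ℝ) ^ (-((j₀:ℝ) + j)) := by
            exact mul_le_mul_of_nonneg_left h1 hC.le
        _ = (C * (3:ℝ) ^ (-(j₀:ℝ))) * (3:ℝ) ^ (-(j:ℝ)) := h2'
        _ ≤ (1 - 1/Real.sqrt 2) * (3:ℝ) ^ (-(j:ℝ)) :=
            mul_le_mul_of_nonneg_right hj₀ (Real.rpow_nonneg (by norm_num) _)
    -- geometric comparisons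
    have key1 : (2:ℝ) ^ (-(j:ℝ)) ≤ (1/Real.sqrt 2) * (2:ℝ) ^ (-((j:ℝ)+1)/2) := by
      rw [hs2, ← Real.rpow_add (by norm_num)]
      apply Real.rpow_le_rpow_of_exponent_le (by norm_num)
      linarith
    have key2 : (3:ℝ) ^ (-(j:ℝ)) ≤ (2:ℝ) ^ (-((j:ℝ)+1)/2) := by
      have a1 : (3:ℝ) ^ (-(j:ℝ)) ≤ (2:ℝ) ^ (-(j:ℝ)) := by
        rw [Real.rpow_neg (by norm_num : (0:ℝ) ≤ 3), Real.rpow_neg (by norm_num : (0:ℝ) ≤ 2)]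
        apply inv_anti₀ (Real.rpow_pos_of_pos (by norm_num) _)
        exact Real.rpow_le_rpow (by norm_num) (by norm_num) (by linarith)
      have a2 : (2:ℝ) ^ (-(j:ℝ)) ≤ (2:ℝ) ^ (-((j:ℝ)+1)/2) := by
        apply Real.rpow_le_rpow_of_exponent_le (by norm_num)
        linarith
      linarith
    have hsnn : (0:ℝ) ≤ 1 - 1/Real.sqrt 2 := by
      rw [hs2]
      have : (2:ℝ) ^ (-(1:ℝ)/2) ≤ (2:ℝ) ^ (0:ℝ) :=
        Real.rpow_le_rpow_of_exponent_le (by norm_num) (by norm_num)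
      simpa using this
    have key3 : (2:ℝ) ^ (-(j:ℝ)) + (1 - 1/Real.sqrt 2) * (3:ℝ) ^ (-(j:ℝ))
        ≤ (2:ℝ) ^ (-((j:ℝ)+1)/2) := by
      have := mul_le_mul_of_nonneg_left key2 hsnn
      have hfin : (1/Real.sqrt 2) * (2:ℝ) ^ (-((j:ℝ)+1)/2)
          + (1 - 1/Real.sqrt 2) * (2:ℝ) ^ (-((j:ℝ)+1)/2) = (2:ℝ) ^ (-((j:ℝ)+1)/2) := by ring
      linarith
    have := hrec j hj
    have : q (j+1) ≤ (2:ℝ) ^ (-((j:ℝ)+1)/2) := by linarith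
    convert this using 2
    push_cast
    ring
end

section
/- Let α ≥ 1, C > 0, and (q_j) a sequence in [0,1] with q_j → 0 satisfying q_{j+1} ≤ q_j² + C·3^{−jα} for all j. Then there exist a constant c > 0 and j_1 ∈ ℕ such that q_{j_1+j} ≤ (1/2)·3^{−αj} for all j ≥ 1; consequently there exists c' > 0 such that for all r ≥ 1, inf over j with 3^{j_1+j} ≤ r of q_{j_1+j} is at most c'·r^{−α}. -/
/-!
Write `ρ = 3^{-α} ∈ (0, 1)`, so that the recursion reads `q_{j+1} ≤ q_j² + C ρ^j`. Since `q_j → 0`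
and `C ρ^j → 0`, some `j₁` has `q_{j₁} ≤ ρ/4` and `C ρ^{j₁} ≤ ρ/4`. From there the forcing term is
at most `ρ^{n+1}/4` and, by induction, `q_{j₁+n} ≤ ρ^n/2`: squaring the bound gives
`ρ^{2n}/4 ≤ ρ^{n+1}/4` as soon as `n ≥ 1`. For the interpolation, take the largest `j` with
`3^{j₁+j} ≤ r`; then `r < 3^{j₁+j+1}`, so `3^{-αj} ≤ 3^{(j₁+1)α} r^{-α}`.
-/

open Filter Topology

lemma le_half_pow_of_le_sq_add {ρ : ℝ} (hρ0 : 0 ≤ ρ) (hρ1 : ρ ≤ 1) {u : ℕ → ℝ}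
    (hu0 : ∀ n, 0 ≤ u n) (hu_init : u 0 ≤ ρ / 4)
    (hu : ∀ n, u (n + 1) ≤ u n ^ 2 + ρ ^ (n + 1) / 4) (n : ℕ) :
    u n ≤ ρ ^ n / 2 := by
  have hsucc : ∀ n, u (n + 1) ≤ ρ ^ (n + 1) / 2 := by
    intro n
    induction n with
    | zero => nlinarith [hu 0, hu0 0]
    | succ n ih =>
      have hsq : (ρ ^ (n + 1)) ^ 2 ≤ ρ ^ (n + 2) := by
        rw [← pow_mul]
        exact pow_le_pow_of_le_one hρ0 hρ1 (by omega)
      calc u (n + 2) ≤ u (n + 1) ^ 2 + ρ ^ (n + 2) / 4 := hu (n + 1)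
        _ ≤ (ρ ^ (n + 1) / 2) ^ 2 + ρ ^ (n + 2) / 4 := by gcongr; exact hu0 _
        _ ≤ ρ ^ (n + 2) / 2 := by linarith
  rcases n with _ | n
  · linarith
  · exact hsucc n

lemma exists_forall_le_half_pow_of_le_sq_add {ρ C : ℝ} (hρ0 : 0 < ρ) (hρ1 : ρ < 1)
    {q : ℕ → ℝ} (hq0 : ∀ j, 0 ≤ q j) (hlim : Tendsto q atTop (𝓝 0))
    (hrec : ∀ j, q (j + 1) ≤ q j ^ 2 + C * ρ ^ j) :
    ∃ j₁, ∀ j, q (j₁ + j) ≤ ρ ^ j / 2 := by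
  have hρ4 : 0 < ρ / 4 := by positivity
  have hgeom : Tendsto (fun m => C * ρ ^ m) atTop (𝓝 0) := by
    simpa using (tendsto_pow_atTop_nhds_zero_of_lt_one hρ0.le hρ1).const_mul C
  obtain ⟨j₁, hq₁, hC₁⟩ :=
    ((hlim.eventually (ge_mem_nhds hρ4)).and (hgeom.eventually (ge_mem_nhds hρ4))).exists
  refine ⟨j₁, le_half_pow_of_le_sq_add hρ0.le hρ1.le (fun n => hq0 _) hq₁ fun n => ?_⟩
  have hforce : C * ρ ^ (j₁ + n) ≤ ρ ^ (n + 1) / 4 := by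
    calc C * ρ ^ (j₁ + n) = C * ρ ^ j₁ * ρ ^ n := by ring
      _ ≤ ρ / 4 * ρ ^ n := by gcongr
      _ = ρ ^ (n + 1) / 4 := by ring
  calc q (j₁ + (n + 1)) ≤ q (j₁ + n) ^ 2 + C * ρ ^ (j₁ + n) := hrec (j₁ + n)
    _ ≤ q (j₁ + n) ^ 2 + ρ ^ (n + 1) / 4 := by linarith

lemma rpow_neg_mul_le_of_le_pow {b : ℝ} (hb : 0 < b) {α r : ℝ} (hα : 0 ≤ α) (hr : 0 < r)
    {k j : ℕ} (hrb : r ≤ b ^ (k + j + 1)) :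
    b ^ (-α * j) ≤ b ^ (((k : ℝ) + 1) * α) * r ^ (-α) := by
  calc b ^ (-α * j) = b ^ (((k : ℝ) + 1) * α) * (b ^ (k + j + 1)) ^ (-α) := by
        rw [← Real.rpow_natCast, ← Real.rpow_mul hb.le, ← Real.rpow_add hb]
        push_cast
        ring_nf
    _ ≤ b ^ (((k : ℝ) + 1) * α) * r ^ (-α) :=
        mul_le_mul_of_nonneg_left (Real.rpow_le_rpow_of_nonpos hr hrb (neg_nonpos.mpr hα))
          (by positivity)

lemma sInf_le_mul_rpow_neg_of_le_rpow {b k r : ℕ} (hb : 1 < b) {α M : ℝ} (hα : 0 ≤ α)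
    (hM : 0 ≤ M) {w : ℕ → ℝ} (hw0 : ∀ j, 0 ≤ w j) (hw : ∀ j, w j ≤ M * (b : ℝ) ^ (-α * j)) :
    sInf {x : ℝ | ∃ j : ℕ, b ^ (k + j) ≤ r ∧ x = w j} ≤
      M * (b : ℝ) ^ (((k : ℝ) + 1) * α) * (r : ℝ) ^ (-α) := by
  by_cases hk : b ^ k ≤ r
  · have hr : r ≠ 0 := by have := (Nat.one_le_pow k b (by omega)).trans hk; omega
    obtain ⟨j, hj⟩ : ∃ j, Nat.log b r = k + j :=
      ⟨Nat.log b r - k, by have := Nat.le_log_of_pow_le hb hk; omega⟩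
    have hlow : b ^ (k + j) ≤ r := hj ▸ Nat.pow_log_le_self b hr
    have hup : (r : ℝ) ≤ (b : ℝ) ^ (k + j + 1) := by
      exact_mod_cast (hj ▸ Nat.lt_pow_succ_log_self hb r).le
    have hbdd : BddBelow {x : ℝ | ∃ j : ℕ, b ^ (k + j) ≤ r ∧ x = w j} := by
      refine ⟨0, ?_⟩
      rintro x ⟨j, -, rfl⟩
      exact hw0 j
    calc sInf {x : ℝ | ∃ j : ℕ, b ^ (k + j) ≤ r ∧ x = w j} ≤ w j := csInf_le hbdd ⟨j, hlow, rfl⟩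
      _ ≤ M * (b : ℝ) ^ (-α * j) := hw j
      _ ≤ M * ((b : ℝ) ^ (((k : ℝ) + 1) * α) * (r : ℝ) ^ (-α)) := by
          gcongr
          exact rpow_neg_mul_le_of_le_pow (by positivity) hα (by positivity) hup
      _ = _ := by ring
  · have hempty : {x : ℝ | ∃ j : ℕ, b ^ (k + j) ≤ r ∧ x = w j} = ∅ := by
      refine Set.eq_empty_of_forall_notMem ?_
      rintro x ⟨j, hj, -⟩
      exact hk ((Nat.pow_le_pow_right (by omega) (Nat.le_add_right k j)).trans hj)
    rw [hempty, Real.sInf_empty]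
    positivity

theorem stmt10_general (α C : ℝ) (hα : 1 ≤ α)
    (q : ℕ → ℝ) (hq : ∀ j, q j ∈ Set.Icc (0 : ℝ) 1)
    (hlim : Filter.Tendsto q Filter.atTop (nhds 0))
    (hrec : ∀ j, q (j + 1) ≤ (q j) ^ 2 + C * (3 : ℝ) ^ (-(j : ℝ) * α)) :
    ∃ j₁ : ℕ,
      (∀ j : ℕ, 1 ≤ j → q (j₁ + j) ≤ (1 / 2) * (3 : ℝ) ^ (-α * j)) ∧
      ∃ c' : ℝ, 0 < c' ∧ ∀ r : ℕ, 1 ≤ r →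
        sInf {x : ℝ | ∃ j : ℕ, 3 ^ (j₁ + j) ≤ r ∧ x = q (j₁ + j)} ≤
          c' * (r : ℝ) ^ (-α) := by
  set ρ : ℝ := 3 ^ (-α)
  have hρ0 : 0 < ρ := by positivity
  have hρ1 : ρ < 1 := Real.rpow_lt_one_of_one_lt_of_neg (by norm_num) (by linarith)
  have hpow : ∀ j : ℕ, (3 : ℝ) ^ (-α * j) = ρ ^ j := fun j =>
    Real.rpow_mul_natCast (by norm_num) _ _
  obtain ⟨j₁, hdecay⟩ :=
    exists_forall_le_half_pow_of_le_sq_add hρ0 hρ1 (fun j => (hq j).1) hlim fun j => by rw [← hpow, show -α * j = -(j : ℝ) * α by ring]; exact hrec j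
  have hdecay' : ∀ j : ℕ, q (j₁ + j) ≤ 1 / 2 * (3 : ℝ) ^ (-α * j) := fun j => by
    rw [hpow]
    linarith [hdecay j]
  exact ⟨j₁, fun j _ => hdecay' j, _, by positivity, fun r _ =>
    sInf_le_mul_rpow_neg_of_le_rpow (b := 3) (by norm_num) (by linarith) (by norm_num)
      (fun j => (hq _).1) hdecay'⟩

/-- bootstrap from `q_j → 0` with
`q_{j+1} ≤ q_j² + C 3^{-jα}` to polynomial decay
`q_{j₁+j} ≤ (1/2) 3^{-αj}`, and the interpolation to all integers `r`. -/
theorem stmt10 (α C : ℝ) (hα : 1 ≤ α) (hC : 0 < C)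
    (q : ℕ → ℝ) (hq : ∀ j, q j ∈ Set.Icc (0 : ℝ) 1)
    (hlim : Filter.Tendsto q Filter.atTop (nhds 0))
    (hrec : ∀ j, q (j + 1) ≤ (q j) ^ 2 + C * (3 : ℝ) ^ (-(j : ℝ) * α)) :
    ∃ j₁ : ℕ,
      (∀ j : ℕ, 1 ≤ j → q (j₁ + j) ≤ (1 / 2) * (3 : ℝ) ^ (-α * j)) ∧
      ∃ c' : ℝ, 0 < c' ∧ ∀ r : ℕ, 1 ≤ r →
        sInf {x : ℝ | ∃ j : ℕ, 3 ^ (j₁ + j) ≤ r ∧ x = q (j₁ + j)} ≤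
          c' * (r : ℝ) ^ (-α) :=
  stmt10_general α C hα q hq hlim hrec
end
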